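/- Let P ≻ 0 be an n×n positive definite matrix, C an m×n matrix, V ≻ 0 an m×m positive definite matrix, and K = P Cᵀ (C P Cᵀ + V)^{-1}. Then (I - K C) P is positive semidefinite. -/

import Mathlib

open Matrix

/-!
Joseph form: for every gain `K`, `(I - K C) P (I - K C)ᴴ + K V Kᴴ` is a sum of two congruences of
positive semidefinite matrices, hence positive semidefinite. For the optimal gain
`K = P Cᴴ S⁻¹` with `S = C P Cᴴ + V` one has `K S = P Cᴴ`, which collapses the Joseph form to
`(I - K C) P`.
-/

namespace Matrix

variable {ι κ R : Type*} [Fintype ι] [Fintype κ]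

theorem posSemidef_joseph_form [Ring R] [PartialOrder R] [StarRing R] [AddLeftMono R]
    [DecidableEq ι] {P : Matrix ι ι R} {V : Matrix κ κ R} (hP : P.PosSemidef) (hV : V.PosSemidef)
    (K : Matrix ι κ R) (C : Matrix κ ι R) :
    ((1 - K * C) * P * (1 - K * C)ᴴ + K * V * Kᴴ).PosSemidef :=
  (hP.mul_mul_conjTranspose_same _).add (hV.mul_mul_conjTranspose_same K)

theorem joseph_form_eq_of_optimal_gain [DecidableEq ι] [DecidableEq κ] [CommRing R] [StarRing R]
    {P : Matrix ι ι R} {V : Matrix κ κ R} {C : Matrix κ ι R}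
    (hS : IsUnit (C * P * Cᴴ + V).det) {K : Matrix ι κ R} (hK : K = P * Cᴴ * (C * P * Cᴴ + V)⁻¹) :
    (1 - K * C) * P * (1 - K * C)ᴴ + K * V * Kᴴ = (1 - K * C) * P := by
  have hKS : K * (C * P * Cᴴ + V) = P * Cᴴ := by
    rw [hK, Matrix.mul_assoc, nonsing_inv_mul _ hS, Matrix.mul_one]
  calc (1 - K * C) * P * (1 - K * C)ᴴ + K * V * Kᴴ
      = P - K * C * P - P * Cᴴ * Kᴴ + K * (C * P * Cᴴ + V) * Kᴴ := by
        simp only [conjTranspose_sub, conjTranspose_one, conjTranspose_mul, Matrix.mul_add,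
          Matrix.add_mul, Matrix.sub_mul, Matrix.mul_sub, Matrix.mul_one, Matrix.one_mul,
          Matrix.mul_assoc]
        abel
    _ = (1 - K * C) * P := by rw [hKS, Matrix.sub_mul, Matrix.one_mul]; abel

end Matrix

/-- Kalman update: with `P ≻ 0`, `V ≻ 0` and gain `K = P Cᵀ (C P Cᵀ + V)⁻¹`, the posterior
covariance `(I - K C) P` is positive semidefinite. -/
theorem stmt_3 {n m : ℕ} (P : Matrix (Fin n) (Fin n) ℝ) (C : Matrix (Fin m) (Fin n) ℝ)
    (V : Matrix (Fin m) (Fin m) ℝ) (hP : P.PosDef) (hV : V.PosDef)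
    (K : Matrix (Fin n) (Fin m) ℝ) (hK : K = P * Cᵀ * (C * P * Cᵀ + V)⁻¹) :
    ((1 - K * C) * P).PosSemidef := by
  rw [← conjTranspose_eq_transpose_of_trivial] at hK
  have hS : (C * P * Cᴴ + V).PosDef :=
    PosDef.posSemidef_add (hP.posSemidef.mul_mul_conjTranspose_same C) hV
  rw [← joseph_form_eq_of_optimal_gain ((isUnit_iff_isUnit_det _).mp hS.isUnit) hK]
  exact posSemidef_joseph_form hP.posSemidef hV.posSemidef K C
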